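/- arXiv:2301.07556 — 10 statements merged into one kernel-verified Lean document; each statement's English description precedes it below -/
import Mathlib

section
/- Let S ⊆ ℝⁿ be a strongly E-invex set with respect to Ψ, let I be a nonempty index set, and let {h_i}_{i ∈ I} be a family of functions h_i : ℝⁿ → ℝ, each semi strongly E-preinvex with respect to Ψ on S, such that for every u ∈ ℝⁿ the set {h_i u : i ∈ I} is bounded above. Then the function h defined by h s = ⨆_{i ∈ I} h_i s is semi strongly E-preinvex with respect to Ψ on S. -/
open Set

abbrev Rn (n : ℕ) := EuclideanSpace ℝ (Fin n)

/-- A set `S ⊆ ℝⁿ` is strongly E-invex (SEI) with respect to `Ψ`. -/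
def SEISet {n : ℕ} (E : Rn n → Rn n) (Ψ : Rn n × Rn n → Rn n) (S : Set (Rn n)) : Prop :=
  ∀ s ∈ S, ∀ t ∈ S, ∀ α ∈ Icc (0:ℝ) 1, ∀ l ∈ Icc (0:ℝ) 1,
    α • t + E t + l • Ψ (α • s + E s, α • t + E t) ∈ S

/-- Semi strongly E-preinvex (SSEP) with respect to `Ψ` on `S`. -/
def SSEP {n : ℕ} (E : Rn n → Rn n) (Ψ : Rn n × Rn n → Rn n) (S : Set (Rn n))
    (h : Rn n → ℝ) : Prop :=
  ∀ s ∈ S, ∀ t ∈ S, ∀ α ∈ Icc (0:ℝ) 1, ∀ l ∈ Icc (0:ℝ) 1,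
    h (α • t + E t + l • Ψ (α • s + E s, α • t + E t)) ≤ l * h s + (1 - l) * h t

/-- Strictly semi strongly E-preinvex (SSSEP) with respect to `Ψ` on `S`. -/
def SSSEP {n : ℕ} (E : Rn n → Rn n) (Ψ : Rn n × Rn n → Rn n) (S : Set (Rn n))
    (h : Rn n → ℝ) : Prop :=
  ∀ s ∈ S, ∀ t ∈ S, ∀ α ∈ Icc (0:ℝ) 1, ∀ l ∈ Ioo (0:ℝ) 1,
    α • s + E s ≠ α • t + E t →
    h (α • t + E t + l • Ψ (α • s + E s, α • t + E t)) < l * h s + (1 - l) * h t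

/-- Semi quasi strongly E-preinvex (SQSEP) with respect to `Ψ` on `S`. -/
def SQSEP {n : ℕ} (E : Rn n → Rn n) (Ψ : Rn n × Rn n → Rn n) (S : Set (Rn n))
    (h : Rn n → ℝ) : Prop :=
  ∀ s ∈ S, ∀ t ∈ S, ∀ α ∈ Icc (0:ℝ) 1, ∀ l ∈ Icc (0:ℝ) 1,
    h (α • t + E t + l • Ψ (α • s + E s, α • t + E t)) ≤ max (h s) (h t)

/-- Strongly E-preinvex (SEP) with respect to `Ψ` on `S`. -/
def SEP {n : ℕ} (E : Rn n → Rn n) (Ψ : Rn n × Rn n → Rn n) (S : Set (Rn n))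
    (h : Rn n → ℝ) : Prop :=
  ∀ s ∈ S, ∀ t ∈ S, ∀ α ∈ Icc (0:ℝ) 1, ∀ l ∈ Icc (0:ℝ) 1,
    h (α • t + E t + l • Ψ (α • s + E s, α • t + E t)) ≤ l * h (E s) + (1 - l) * h (E t)

/-- Quasi strongly E-preinvex (QSEP) with respect to `Ψ` on `S`. -/
def QSEP {n : ℕ} (E : Rn n → Rn n) (Ψ : Rn n × Rn n → Rn n) (S : Set (Rn n))
    (h : Rn n → ℝ) : Prop :=
  ∀ s ∈ S, ∀ t ∈ S, ∀ α ∈ Icc (0:ℝ) 1, ∀ l ∈ Icc (0:ℝ) 1,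
    h (α • t + E t + l • Ψ (α • s + E s, α • t + E t)) ≤ max (h (E s)) (h (E t))

/-- Semi pseudo strongly E-preinvex (SPSEP) with respect to `Ψ` on `S`. -/
def SPSEP {n : ℕ} (E : Rn n → Rn n) (Ψ : Rn n × Rn n → Rn n) (S : Set (Rn n))
    (h : Rn n → ℝ) : Prop :=
  ∃ b : Rn n × Rn n → ℝ, (∀ s t, 0 < b (s, t)) ∧
    ∀ s ∈ S, ∀ t ∈ S, h s < h t → ∀ α ∈ Icc (0:ℝ) 1, ∀ l ∈ Icc (0:ℝ) 1,
      h (α • t + E t + l • Ψ (α • s + E s, α • t + E t)) ≤ h t + l * (l - 1) * b (s, t)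

/-- A set `G ⊆ ℝⁿ × ℝ` is strongly G-invex with respect to `E` and `Ψ`. -/
def StronglyGInvex {n : ℕ} (E : Rn n → Rn n) (Ψ : Rn n × Rn n → Rn n)
    (G : Set (Rn n × ℝ)) : Prop :=
  ∀ p ∈ G, ∀ q ∈ G, ∀ α ∈ Icc (0:ℝ) 1, ∀ l ∈ Icc (0:ℝ) 1,
    (α • q.1 + E q.1 + l • Ψ (α • p.1 + E p.1, α • q.1 + E q.1),
      l * p.2 + (1 - l) * q.2) ∈ G

theorem stmt3_general {n : ℕ} (E : Rn n → Rn n) (Ψ : Rn n × Rn n → Rn n) (S : Set (Rn n))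
    (I : Type*) [Nonempty I] (f : I → Rn n → ℝ)
    (hbdd : ∀ u : Rn n, BddAbove (Set.range fun i => f i u))
    (hf : ∀ i, SSEP E Ψ S (f i)) :
    SSEP E Ψ S (fun s => ⨆ i, f i s) := by
  intro s hs t ht α hα l hl
  refine ciSup_le fun i => ?_
  calc f i (α • t + E t + l • Ψ (α • s + E s, α • t + E t))
      ≤ l * f i s + (1 - l) * f i t := hf i s hs t ht α hα l hl
    _ ≤ l * (⨆ j, f j s) + (1 - l) * (⨆ j, f j t) := by
        gcongr
        · exact hl.1
        · exact le_ciSup (hbdd s) i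
        · exact sub_nonneg.2 hl.2
        · exact le_ciSup (hbdd t) i

theorem stmt3 {n : ℕ} (E : Rn n → Rn n) (Ψ : Rn n × Rn n → Rn n) (S : Set (Rn n))
    (hS : SEISet E Ψ S) (I : Type*) [Nonempty I] (f : I → Rn n → ℝ)
    (hbdd : ∀ u : Rn n, BddAbove (Set.range fun i => f i u))
    (hf : ∀ i, SSEP E Ψ S (f i)) :
    SSEP E Ψ S (fun s => ⨆ i, f i s) :=
  stmt3_general E Ψ S I f hbdd hf
end

section
/- Let S ⊆ ℝⁿ be a strongly E-invex set with respect to Ψ and let h : ℝⁿ → ℝ be strongly E-preinvex with respect to Ψ on S. Then h is semi strongly E-preinvex with respect to Ψ on S if and only if h (E t) ≤ h t for every t ∈ S. -/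
open Set

theorem SSEP.apply_le {n : ℕ} {E : Rn n → Rn n} {Ψ : Rn n × Rn n → Rn n} {S : Set (Rn n)}
    {h : Rn n → ℝ} (hh : SSEP E Ψ S h) {t : Rn n} (ht : t ∈ S) : h (E t) ≤ h t := by
  -- with `α = l = 0` the SSEP point is `E t` and the bound is `h t`
  simpa using hh t ht t ht 0 (left_mem_Icc.2 zero_le_one) 0 (left_mem_Icc.2 zero_le_one)

theorem SEP.ssep_of_apply_le {n : ℕ} {E : Rn n → Rn n} {Ψ : Rn n × Rn n → Rn n}
    {S : Set (Rn n)} {h : Rn n → ℝ} (hh : SEP E Ψ S h) (hE : ∀ t ∈ S, h (E t) ≤ h t) :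
    SSEP E Ψ S h := by
  intro s hs t ht α hα l hl
  have : 0 ≤ 1 - l := sub_nonneg.2 hl.2
  calc h (α • t + E t + l • Ψ (α • s + E s, α • t + E t))
      ≤ l * h (E s) + (1 - l) * h (E t) := hh s hs t ht α hα l hl
    _ ≤ l * h s + (1 - l) * h t := by
      gcongr
      exacts [hl.1, hE s hs, hE t ht]

theorem stmt5_general {n : ℕ} (E : Rn n → Rn n) (Ψ : Rn n × Rn n → Rn n) (S : Set (Rn n))
    (h : Rn n → ℝ) (hh : SEP E Ψ S h) :
    SSEP E Ψ S h ↔ ∀ t ∈ S, h (E t) ≤ h t :=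
  ⟨fun hs _ ht => hs.apply_le ht, hh.ssep_of_apply_le⟩

theorem stmt5 {n : ℕ} (E : Rn n → Rn n) (Ψ : Rn n × Rn n → Rn n) (S : Set (Rn n))
    (hS : SEISet E Ψ S) (h : Rn n → ℝ) (hh : SEP E Ψ S h) :
    SSEP E Ψ S h ↔ ∀ t ∈ S, h (E t) ≤ h t :=
  stmt5_general E Ψ S h hh
end

section
/- Let S ⊆ ℝⁿ be a strongly E-invex set with respect to Ψ. If h : ℝⁿ → ℝ is semi strongly E-preinvex with respect to Ψ on S, then h is semi pseudo strongly E-preinvex with respect to Ψ on S. -/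
open Set

-- The right side exceeds the left one by `l ^ 2 * (y - x)`.
theorem mul_add_one_sub_mul_le {x y : ℝ} (hxy : x ≤ y) (l : ℝ) :
    l * x + (1 - l) * y ≤ y + l * (l - 1) * (y - x) := by
  linarith [mul_nonneg (sq_nonneg l) (sub_nonneg.mpr hxy)]

theorem stmt8_general {n : ℕ} (E : Rn n → Rn n) (Ψ : Rn n × Rn n → Rn n) (S : Set (Rn n))
    (h : Rn n → ℝ) (hh : SSEP E Ψ S h) :
    SPSEP E Ψ S h := by
  -- `b` is the gap `h t - h s` wherever the definition of SPSEP consults it, and `1` elsewhere.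
  refine ⟨fun p => if h p.1 < h p.2 then h p.2 - h p.1 else 1, fun s t => ?_,
    fun s hs t ht hst α hα l hl => ?_⟩
  · dsimp only
    split_ifs with hst
    · exact sub_pos.mpr hst
    · exact one_pos
  · dsimp only
    rw [if_pos hst]
    exact (hh s hs t ht α hα l hl).trans (mul_add_one_sub_mul_le hst.le l)

theorem stmt8 {n : ℕ} (E : Rn n → Rn n) (Ψ : Rn n × Rn n → Rn n) (S : Set (Rn n))
    (hS : SEISet E Ψ S) (h : Rn n → ℝ) (hh : SSEP E Ψ S h) :
    SPSEP E Ψ S h :=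
  stmt8_general E Ψ S h hh
end

section
/- Let S ⊆ ℝⁿ be a strongly E-invex set with respect to Ψ and let h : ℝⁿ → ℝ. Then h is semi quasi strongly E-preinvex with respect to Ψ on S if and only if for every r ∈ ℝ the lower level set K_r = {s ∈ S : h s ≤ r} is strongly E-invex with respect to Ψ. -/
open Set

theorem SEISet.sep_le_of_sqsep {n : ℕ} {E : Rn n → Rn n} {Ψ : Rn n × Rn n → Rn n}
    {S : Set (Rn n)} {h : Rn n → ℝ} (hS : SEISet E Ψ S) (hq : SQSEP E Ψ S h) (r : ℝ) :
    SEISet E Ψ {s ∈ S | h s ≤ r} :=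
  fun s hs t ht α hα l hl =>
    ⟨hS s hs.1 t ht.1 α hα l hl, (hq s hs.1 t ht.1 α hα l hl).trans (max_le hs.2 ht.2)⟩

theorem sqsep_of_forall_seiSet_sep_le {n : ℕ} {E : Rn n → Rn n} {Ψ : Rn n × Rn n → Rn n}
    {S : Set (Rn n)} {h : Rn n → ℝ} (hK : ∀ r : ℝ, SEISet E Ψ {s ∈ S | h s ≤ r}) :
    SQSEP E Ψ S h :=
  fun s hs t ht α hα l hl =>
    (hK (max (h s) (h t)) s ⟨hs, le_max_left _ _⟩ t ⟨ht, le_max_right _ _⟩ α hα l hl).2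

theorem stmt9 {n : ℕ} (E : Rn n → Rn n) (Ψ : Rn n × Rn n → Rn n) (S : Set (Rn n))
    (hS : SEISet E Ψ S) (h : Rn n → ℝ) :
    SQSEP E Ψ S h ↔ ∀ r : ℝ, SEISet E Ψ {s ∈ S | h s ≤ r} :=
  ⟨hS.sep_le_of_sqsep, sqsep_of_forall_seiSet_sep_le⟩
end

section
/- Let S ⊆ ℝⁿ be a strongly E-invex set with respect to Ψ and let h : ℝⁿ → ℝ be semi strongly E-preinvex with respect to Ψ on S. Then for every r ∈ ℝ the lower level set K_r = {s ∈ S : h s ≤ r} is strongly E-invex with respect to Ψ. -/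
open Set

theorem SSEP.le_of_le {n : ℕ} {E : Rn n → Rn n} {Ψ : Rn n × Rn n → Rn n} {S : Set (Rn n)}
    {h : Rn n → ℝ} (hh : SSEP E Ψ S h) {s t : Rn n} (hs : s ∈ S) (ht : t ∈ S)
    {α l r : ℝ} (hα : α ∈ Icc (0:ℝ) 1) (hl : l ∈ Icc (0:ℝ) 1) (hsr : h s ≤ r) (htr : h t ≤ r) :
    h (α • t + E t + l • Ψ (α • s + E s, α • t + E t)) ≤ r :=
  calc h (α • t + E t + l • Ψ (α • s + E s, α • t + E t))
      ≤ l * h s + (1 - l) * h t := hh s hs t ht α hα l hl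
    _ ≤ r := convex_Iic r hsr htr hl.1 (sub_nonneg.2 hl.2) (add_sub_cancel l 1)

theorem stmt10 {n : ℕ} (E : Rn n → Rn n) (Ψ : Rn n × Rn n → Rn n) (S : Set (Rn n))
    (hS : SEISet E Ψ S) (h : Rn n → ℝ) (hh : SSEP E Ψ S h) :
    ∀ r : ℝ, SEISet E Ψ {s ∈ S | h s ≤ r} :=
  fun _ s hs t ht α hα l hl =>
    ⟨hS s hs.1 t ht.1 α hα l hl, hh.le_of_le hs.1 ht.1 hα hl hs.2 ht.2⟩
end

section
/- Let S ⊆ ℝⁿ be a strongly E-invex set with respect to Ψ and let h : ℝⁿ → ℝ. Then h is semi strongly E-preinvex with respect to Ψ on S if and only if the epigraph epi(h) = {(s, γ) ∈ ℝⁿ × ℝ : s ∈ S ∧ h s ≤ γ} is a strongly G-invex subset of ℝⁿ × ℝ. -/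
open Set

def epigraphOn {n : ℕ} (S : Set (Rn n)) (h : Rn n → ℝ) : Set (Rn n × ℝ) :=
  {p | p.1 ∈ S ∧ h p.1 ≤ p.2}

section

variable {n : ℕ} {E : Rn n → Rn n} {Ψ : Rn n × Rn n → Rn n} {S : Set (Rn n)} {h : Rn n → ℝ}

theorem SSEP.stronglyGInvex_epigraphOn (hS : SEISet E Ψ S) (hh : SSEP E Ψ S h) :
    StronglyGInvex E Ψ (epigraphOn S h) := by
  rintro ⟨s, a⟩ ⟨hs, hsa⟩ ⟨t, b⟩ ⟨ht, htb⟩ α hα l hl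
  refine ⟨hS s hs t ht α hα l hl, ?_⟩
  have hl' : 0 ≤ 1 - l := sub_nonneg.mpr hl.2
  calc h _ ≤ l * h s + (1 - l) * h t := hh s hs t ht α hα l hl
    _ ≤ l * a + (1 - l) * b := by gcongr; exact hl.1

theorem SSEP.of_stronglyGInvex_epigraphOn (hG : StronglyGInvex E Ψ (epigraphOn S h)) :
    SSEP E Ψ S h := fun s hs t ht α hα l hl =>
  (hG (s, h s) ⟨hs, le_rfl⟩ (t, h t) ⟨ht, le_rfl⟩ α hα l hl).2

end

theorem stmt11 {n : ℕ} (E : Rn n → Rn n) (Ψ : Rn n × Rn n → Rn n) (S : Set (Rn n))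
    (hS : SEISet E Ψ S) (h : Rn n → ℝ) :
    SSEP E Ψ S h ↔
      StronglyGInvex E Ψ {p : Rn n × ℝ | p.1 ∈ S ∧ h p.1 ≤ p.2} :=
  ⟨SSEP.stronglyGInvex_epigraphOn hS, SSEP.of_stronglyGInvex_epigraphOn⟩
end

section
/- Suppose ℝⁿ itself is a strongly E-invex set with respect to Ψ, and let h₁, …, h_k : ℝⁿ → ℝ all be semi strongly E-preinvex with respect to Ψ on ℝⁿ. Then the set S = {s ∈ ℝⁿ : h_i s ≤ 0 for all 1 ≤ i ≤ k} is strongly E-invex with respect to Ψ. -/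
open Set

section

variable {n : ℕ} {E : Rn n → Rn n} {Ψ : Rn n × Rn n → Rn n}

theorem SSEP.apply_le_of_le {S : Set (Rn n)} {h : Rn n → ℝ} (hh : SSEP E Ψ S h)
    {s t : Rn n} (hs : s ∈ S) (ht : t ∈ S) {α l : ℝ} (hα : α ∈ Icc (0:ℝ) 1)
    (hl : l ∈ Icc (0:ℝ) 1) {c : ℝ} (hsc : h s ≤ c) (htc : h t ≤ c) :
    h (α • t + E t + l • Ψ (α • s + E s, α • t + E t)) ≤ c :=
  calc h (α • t + E t + l • Ψ (α • s + E s, α • t + E t))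
      ≤ l * h s + (1 - l) * h t := hh s hs t ht α hα l hl
    _ ≤ l * c + (1 - l) * c := by
        gcongr
        · exact hl.1
        · linarith [hl.2]
    _ = c := by ring

theorem SSEP.seiSet_setOf_le {h : Rn n → ℝ} (hh : SSEP E Ψ univ h) (c : ℝ) :
    SEISet E Ψ {s | h s ≤ c} :=
  fun _s hs _t ht _α hα _l hl => hh.apply_le_of_le (mem_univ _) (mem_univ _) hα hl hs ht

theorem SEISet.iInter {ι : Sort*} {S : ι → Set (Rn n)} (hS : ∀ i, SEISet E Ψ (S i)) :
    SEISet E Ψ (⋂ i, S i) := by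
  intro s hs t ht α hα l hl
  simp only [mem_iInter] at hs ht ⊢
  exact fun i => hS i s (hs i) t (ht i) α hα l hl

end

theorem stmt12_general {n : ℕ} (E : Rn n → Rn n) (Ψ : Rn n × Rn n → Rn n)
    (k : ℕ) (f : Fin k → Rn n → ℝ)
    (hf : ∀ i, SSEP E Ψ (Set.univ : Set (Rn n)) (f i)) :
    SEISet E Ψ {s : Rn n | ∀ i, f i s ≤ 0} := by
  rw [ofPred_forall]
  exact SEISet.iInter fun i => (hf i).seiSet_setOf_le 0

theorem stmt12 {n : ℕ} (E : Rn n → Rn n) (Ψ : Rn n × Rn n → Rn n)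
    (hRn : SEISet E Ψ (Set.univ : Set (Rn n)))
    (k : ℕ) (f : Fin k → Rn n → ℝ)
    (hf : ∀ i, SSEP E Ψ (Set.univ : Set (Rn n)) (f i)) :
    SEISet E Ψ {s : Rn n | ∀ i, f i s ≤ 0} :=
  stmt12_general E Ψ k f hf
end

section
/- Let X ⊆ ℝⁿ be a strongly E-invex set with respect to Ψ, let h : ℝⁿ → ℝ satisfy h (α • t + E t) ≤ h t for all t ∈ X and all α ∈ [0,1], and fix α ∈ [0,1]. If t* ∈ X minimizes the function t ↦ h (α • t + E t) over X (i.e. h (α • t* + E t*) ≤ h (α • t + E t) for all t ∈ X), then α • t* + E t* ∈ X and h (α • t* + E t*) ≤ h t for all t ∈ X; that is, α • t* + E t* is an optimal solution of the problem of minimizing h over X. -/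
open Set

theorem SEISet.smul_add_mem {n : ℕ} {E : Rn n → Rn n} {Ψ : Rn n × Rn n → Rn n}
    {X : Set (Rn n)} (hX : SEISet E Ψ X) {t : Rn n} (ht : t ∈ X) {α : ℝ}
    (hα : α ∈ Icc (0:ℝ) 1) : α • t + E t ∈ X := by
  simpa only [zero_smul, add_zero] using hX t ht t ht α hα 0 ⟨le_rfl, zero_le_one⟩

theorem stmt14 {n : ℕ} (E : Rn n → Rn n) (Ψ : Rn n × Rn n → Rn n) (X : Set (Rn n))
    (hX : SEISet E Ψ X) (h : Rn n → ℝ)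
    (hdec : ∀ t ∈ X, ∀ α ∈ Icc (0:ℝ) 1, h (α • t + E t) ≤ h t)
    (α : ℝ) (hα : α ∈ Icc (0:ℝ) 1)
    (tstar : Rn n) (htstar : tstar ∈ X)
    (hmin : ∀ t ∈ X, h (α • tstar + E tstar) ≤ h (α • t + E t)) :
    α • tstar + E tstar ∈ X ∧ ∀ t ∈ X, h (α • tstar + E tstar) ≤ h t := by
  refine ⟨hX.smul_add_mem htstar hα, fun t ht => ?_⟩
  exact (hmin t ht).trans (hdec t ht α hα)
end

section
/- Let X ⊆ ℝⁿ be a strongly E-invex set with respect to Ψ and let h : ℝⁿ → ℝ be strictly semi strongly E-preinvex with respect to Ψ on X. Then the global optimal solution of the problem of minimizing h over X is unique: if s, t ∈ X satisfy h s ≤ h u and h t ≤ h u for all u ∈ X, then s = t. -/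
open Set

theorem exists_smul_add_ne_smul_add {V : Type*} [AddCommGroup V] [Module ℝ V] (E : V → V)
    {s t : V} (hne : s ≠ t) : ∃ α ∈ Icc (0:ℝ) 1, α • s + E s ≠ α • t + E t := by
  by_cases hE : E s = E t
  · refine ⟨1, right_mem_Icc.2 zero_le_one, ?_⟩
    simpa [hE] using hne
  · exact ⟨0, left_mem_Icc.2 zero_le_one, by simpa using hE⟩

theorem SSSEP.exists_mem_lt_average {n : ℕ} {E : Rn n → Rn n} {Ψ : Rn n × Rn n → Rn n}
    {X : Set (Rn n)} {h : Rn n → ℝ} (hh : SSSEP E Ψ X h) (hX : SEISet E Ψ X)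
    {s t : Rn n} (hs : s ∈ X) (ht : t ∈ X) (hne : s ≠ t) :
    ∃ u ∈ X, h u < (h s + h t) / 2 := by
  obtain ⟨α, hα, hneα⟩ := exists_smul_add_ne_smul_add E hne
  refine ⟨_, hX s hs t ht α hα (1 / 2) ⟨by norm_num, by norm_num⟩, ?_⟩
  have hlt := hh s hs t ht α hα (1 / 2) ⟨by norm_num, by norm_num⟩ hneα
  linarith

theorem stmt16 {n : ℕ} (E : Rn n → Rn n) (Ψ : Rn n × Rn n → Rn n) (X : Set (Rn n))
    (hX : SEISet E Ψ X) (h : Rn n → ℝ) (hh : SSSEP E Ψ X h)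
    (s t : Rn n) (hs : s ∈ X) (ht : t ∈ X)
    (hsmin : ∀ u ∈ X, h s ≤ h u) (htmin : ∀ u ∈ X, h t ≤ h u) :
    s = t := by
  by_contra hne
  obtain ⟨u, hu, hlt⟩ := hh.exists_mem_lt_average hX hs ht hne
  linarith [hsmin u hu, htmin u hu]
end

section
/- Let X ⊆ ℝⁿ be a strongly E-invex set with respect to Ψ, let h : ℝⁿ → ℝ be semi strongly E-preinvex with respect to Ψ on X, and let β ∈ ℝ be such that β = h u₀ for some u₀ ∈ X and β ≤ h u for all u ∈ X (β is the minimum value of h on X). Then the set of optimal solutions X_opt = {s ∈ X : h s = β} is strongly E-invex with respect to Ψ. -/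
open Set

theorem SSEP.seiSet_sublevel {n : ℕ} {E : Rn n → Rn n} {Ψ : Rn n × Rn n → Rn n}
    {X : Set (Rn n)} {h : Rn n → ℝ} (hh : SSEP E Ψ X h) (hX : SEISet E Ψ X) (β : ℝ) :
    SEISet E Ψ {s ∈ X | h s ≤ β} := by
  rintro s ⟨hsX, hs⟩ t ⟨htX, ht⟩ α hα l ⟨hl₀, hl₁⟩
  refine ⟨hX s hsX t htX α hα l ⟨hl₀, hl₁⟩, ?_⟩
  calc _ ≤ l * h s + (1 - l) * h t := hh s hsX t htX α hα l ⟨hl₀, hl₁⟩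
    _ ≤ l * β + (1 - l) * β := by gcongr
    _ = β := by ring

theorem stmt17_general {n : ℕ} (E : Rn n → Rn n) (Ψ : Rn n × Rn n → Rn n) (X : Set (Rn n))
    (hX : SEISet E Ψ X) (h : Rn n → ℝ) (hh : SSEP E Ψ X h)
    (β : ℝ) (hβmin : ∀ u ∈ X, β ≤ h u) :
    SEISet E Ψ {s ∈ X | h s = β} := by
  have hopt : {s ∈ X | h s = β} = {s ∈ X | h s ≤ β} := by
    ext s
    exact and_congr_right fun hs => ⟨le_of_eq, fun hle => le_antisymm hle (hβmin s hs)⟩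
  rw [hopt]
  exact hh.seiSet_sublevel hX β

theorem stmt17 {n : ℕ} (E : Rn n → Rn n) (Ψ : Rn n × Rn n → Rn n) (X : Set (Rn n))
    (hX : SEISet E Ψ X) (h : Rn n → ℝ) (hh : SSEP E Ψ X h)
    (β : ℝ) (hβ : ∃ u₀ ∈ X, h u₀ = β) (hβmin : ∀ u ∈ X, β ≤ h u) :
    SEISet E Ψ {s ∈ X | h s = β} :=
  stmt17_general E Ψ X hX h hh β hβmin
end
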